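/- arXiv:1305.1256 — 2 statements merged into one kernel-verified Lean document; each statement's English description precedes it below -/
import Mathlib

section
/- Let H be a real inner product space, α ≥ 0, and w ∈ H. Define T_α(w) = (max(‖w‖ − α, 0)/‖w‖)·w for w ≠ 0 and T_α(0) = 0. Then T_α(w) is the unique global minimizer of the function u ↦ α‖u‖ + ½‖u − w‖² on H. -/
/-!
`w - T_α(w)` is a subgradient of `α‖·‖` at `T_α(w)`: it has norm at most `α` and pairs with
`T_α(w)` to `α‖T_α(w)‖`. For any function `f` with subgradient `w - T` at `T`, expanding
`‖u - w‖² = ‖u - T‖² - 2⟪u - T, w - T⟫ + ‖w - T‖²` shows that `f + ½‖· - w‖²` exceeds its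
value at `T` by at least `½‖u - T‖²`, which gives both minimality and uniqueness.
-/

open Classical
open scoped RealInnerProductSpace

section

variable {H : Type*} [NormedAddCommGroup H] [InnerProductSpace ℝ H]

theorem mul_norm_add_inner_sub_le_mul_norm {α : ℝ} {x g : H} (hg : ‖g‖ ≤ α)
    (hx : ⟪x, g⟫ = α * ‖x‖) (u : H) : α * ‖x‖ + ⟪u - x, g⟫ ≤ α * ‖u‖ := by
  have hug : ⟪u, g⟫ ≤ α * ‖u‖ :=
    calc ⟪u, g⟫ ≤ ‖u‖ * ‖g‖ := real_inner_le_norm u g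
      _ ≤ ‖u‖ * α := by gcongr
      _ = α * ‖u‖ := mul_comm _ _
  rw [inner_sub_left, hx]
  linarith

theorem add_half_norm_sub_sq_le_of_subgradient {f : H → ℝ} {w x : H}
    (hf : ∀ u, f x + ⟪u - x, w - x⟫ ≤ f u) (u : H) :
    f x + 1 / 2 * ‖x - w‖ ^ 2 + 1 / 2 * ‖u - x‖ ^ 2 ≤ f u + 1 / 2 * ‖u - w‖ ^ 2 := by
  have hexpand : ‖u - w‖ ^ 2 = ‖u - x‖ ^ 2 - 2 * ⟪u - x, w - x⟫ + ‖w - x‖ ^ 2 := by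
    rw [← norm_sub_sq_real, sub_sub_sub_cancel_right]
  rw [hexpand, norm_sub_rev x w]
  linarith [hf u]

noncomputable def shrinkage (α : ℝ) (w : H) : H :=
  if w = 0 then 0 else (max (‖w‖ - α) 0 / ‖w‖) • w

theorem shrinkage_of_norm_le {α : ℝ} {w : H} (h : ‖w‖ ≤ α) : shrinkage α w = 0 := by
  simp [shrinkage, max_eq_right (sub_nonpos.mpr h)]

theorem shrinkage_of_lt_norm {α : ℝ} {w : H} (h : α < ‖w‖) :
    shrinkage α w = ((‖w‖ - α) / ‖w‖) • w := by
  rw [shrinkage, max_eq_left (sub_nonneg.mpr h.le)]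
  split_ifs with hw
  · simp [hw]
  · rfl

theorem sub_shrinkage_of_lt_norm {α : ℝ} {w : H} (h : α < ‖w‖) :
    w - shrinkage α w = (α / ‖w‖) • w := by
  rcases eq_or_ne w 0 with rfl | hw
  · simp [shrinkage]
  have hcoeff : 1 - (‖w‖ - α) / ‖w‖ = α / ‖w‖ := by
    field_simp [norm_ne_zero_iff.mpr hw]
    ring
  rw [shrinkage_of_lt_norm h, ← hcoeff, sub_smul, one_smul]

theorem norm_sub_shrinkage_le {α : ℝ} (hα : 0 ≤ α) (w : H) : ‖w - shrinkage α w‖ ≤ α := by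
  rcases le_or_gt ‖w‖ α with h | h
  · rwa [shrinkage_of_norm_le h, sub_zero]
  · have hw : 0 < ‖w‖ := hα.trans_lt h
    rw [sub_shrinkage_of_lt_norm h, norm_smul, Real.norm_of_nonneg (by positivity),
      div_mul_cancel₀ _ hw.ne']

theorem inner_shrinkage_sub_shrinkage (α : ℝ) (w : H) :
    ⟪shrinkage α w, w - shrinkage α w⟫ = α * ‖shrinkage α w‖ := by
  rcases le_or_gt ‖w‖ α with h | h
  · simp [shrinkage_of_norm_le h]
  rcases eq_or_ne w 0 with rfl | hw
  · simp [shrinkage]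
  have hw : 0 < ‖w‖ := norm_pos_iff.mpr hw
  rw [sub_shrinkage_of_lt_norm h, shrinkage_of_lt_norm h, real_inner_smul_left,
    real_inner_smul_right, real_inner_self_eq_norm_sq, norm_smul,
    Real.norm_of_nonneg (div_nonneg (sub_nonneg.mpr h.le) hw.le)]
  field_simp

end

/-- In a real inner product space, the shrinkage operator
`T_α(w) = (max(‖w‖ − α, 0)/‖w‖)·w` (with `T_α(0) = 0`) is the unique global minimizer
of `u ↦ α‖u‖ + ½‖u − w‖²`, i.e. the proximal operator of `α‖·‖`. -/
theorem shrinkage_is_unique_minimizer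
    {H : Type*} [NormedAddCommGroup H] [InnerProductSpace ℝ H]
    (α : ℝ) (hα : 0 ≤ α) (w : H)
    (T : H) (hT : T = if w = 0 then 0 else (max (‖w‖ - α) 0 / ‖w‖) • w) :
    (∀ u : H, α * ‖T‖ + (1 / 2) * ‖T - w‖ ^ 2 ≤ α * ‖u‖ + (1 / 2) * ‖u - w‖ ^ 2) ∧
    (∀ u : H,
        (∀ v : H, α * ‖u‖ + (1 / 2) * ‖u - w‖ ^ 2 ≤ α * ‖v‖ + (1 / 2) * ‖v - w‖ ^ 2) →
        u = T) := by
  obtain rfl : T = shrinkage α w := hT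
  have hprox := add_half_norm_sub_sq_le_of_subgradient (f := fun u ↦ α * ‖u‖)
    (mul_norm_add_inner_sub_le_mul_norm (norm_sub_shrinkage_le hα w)
      (inner_shrinkage_sub_shrinkage α w))
  refine ⟨fun u ↦ by linarith [hprox u, sq_nonneg ‖u - shrinkage α w‖], fun u hu ↦ ?_⟩
  have hsq : ‖u - shrinkage α w‖ ^ 2 ≤ 0 := by linarith [hprox u, hu (shrinkage α w)]
  simpa [sub_eq_zero] using hsq
end

section
/- Let n be a natural number, f : ℝⁿ → ℝ a convex differentiable function, β ≥ 0, γ > 0, and let F(w) = f(w) + β·∑ᵢ|wᵢ|. Then w⋆ ∈ ℝⁿ is a global minimizer of F if and only if w⋆ is a fixed point of the ISTA step, i.e. w⋆ = S_{βγ}(w⋆ − γ∇f(w⋆)), where S_{βγ} is applied coordinatewise. -/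
/-!
Since `F = f + β‖·‖₁` is convex, `w⋆` minimizes `F` iff the first-order condition
`β‖w⋆‖₁ ≤ β‖w‖₁ + ⟪∇f(w⋆), w - w⋆⟫` holds for every `w` (one-sided Fermat along segments for `⇒`,
the gradient inequality of `f` for `⇐`). This condition separates into one scalar condition per
coordinate, `-∂ᵢf(w⋆) ∈ β ∂|·|(w⋆ᵢ)`, that is `|∂ᵢf(w⋆)| ≤ β` and `∂ᵢf(w⋆) w⋆ᵢ = -β|w⋆ᵢ|`.
Soft-thresholding is the proximal map of `α|·|`: `S_α(u) = x` iff `u - x ∈ α ∂|·|(x)`, and with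
`u = x - γ ∂ᵢf(w⋆)`, `α = βγ` this is the same scalar condition.
-/

open Set InnerProductSpace

theorem ConvexOn.apply_add_smul_sub_le {E : Type*} [AddCommGroup E] [Module ℝ E] {s : Set E}
    {h : E → ℝ} (hh : ConvexOn ℝ s h) {x y : E} (hx : x ∈ s) (hy : y ∈ s) {t : ℝ}
    (ht : t ∈ Icc (0 : ℝ) 1) : h (x + t • (y - x)) ≤ h x + t * (h y - h x) := by
  have := hh.2 hx hy (sub_nonneg.2 ht.2) ht.1 (by ring)
  rw [show (1 - t) • x + t • y = x + t • (y - x) by module, smul_eq_mul, smul_eq_mul] at this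
  linarith

section FirstOrder

variable {E : Type*} [NormedAddCommGroup E] [NormedSpace ℝ E]
  {f h : E → ℝ} {f' : StrongDual ℝ E} {x y : E}

theorem HasFDerivAt.le_apply_sub_of_forall_mem_Icc (hf : HasFDerivAt f f' x) {c : ℝ}
    (hc : ∀ t ∈ Icc (0 : ℝ) 1, t * c ≤ f (x + t • (y - x)) - f x) : c ≤ f' (y - x) := by
  set ψ : ℝ → ℝ := fun t => f (x + t • (y - x)) - t * c
  have hψ : HasDerivAt ψ (f' (y - x) - c) 0 :=
    (hf.hasLineDerivAt (y - x)).sub (hasDerivAt_mul_const c)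
  have hmin : IsMinOn ψ (Icc 0 1) 0 := fun t ht => by
    simpa [ψ, sub_nonneg, le_sub_iff_add_le, add_comm] using hc t ht
  have hone : (1 : ℝ) ∈ posTangentConeAt (Icc (0 : ℝ) 1) 0 :=
    mem_posTangentConeAt_of_segment_subset (by simp [segment_eq_Icc])
  simpa using hmin.localize.hasFDerivWithinAt_nonneg hψ.hasFDerivAt.hasFDerivWithinAt hone

theorem ConvexOn.add_apply_sub_le_of_hasFDerivAt (hconv : ConvexOn ℝ univ f)
    (hf : HasFDerivAt f f' x) (y : E) : f x + f' (y - x) ≤ f y := by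
  have := hf.neg.le_apply_sub_of_forall_mem_Icc (y := y) (c := f x - f y) fun t ht => by
    have := hconv.apply_add_smul_sub_le (mem_univ x) (mem_univ y) ht
    simp only [Pi.neg_apply]
    linarith
  simp only [neg_apply] at this
  linarith

theorem le_add_apply_sub_of_forall_add_le (hh : ConvexOn ℝ univ h) (hf : HasFDerivAt f f' x)
    (hmin : ∀ y, f x + h x ≤ f y + h y) (y : E) : h x ≤ h y + f' (y - x) := by
  have := hf.le_apply_sub_of_forall_mem_Icc (y := y) (c := h x - h y) fun t ht => by
    linarith [hh.apply_add_smul_sub_le (mem_univ x) (mem_univ y) ht, hmin (x + t • (y - x))]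
  linarith

theorem forall_add_le_iff_of_convexOn (hconv : ConvexOn ℝ univ f) (hh : ConvexOn ℝ univ h)
    (hf : HasFDerivAt f f' x) :
    (∀ y, f x + h x ≤ f y + h y) ↔ ∀ y, h x ≤ h y + f' (y - x) :=
  ⟨le_add_apply_sub_of_forall_add_le hh hf, fun hvar y => by
    linarith [hvar y, hconv.add_apply_sub_le_of_hasFDerivAt hf y]⟩

end FirstOrder

theorem convexOn_univ_sum_abs {ι : Type*} [Fintype ι] :
    ConvexOn ℝ univ fun w : EuclideanSpace ℝ ι => ∑ i, |w i| := by
  refine ⟨convex_univ, fun x _ y _ a b ha hb _ => ?_⟩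
  simp only [PiLp.add_apply, PiLp.smul_apply, smul_eq_mul, Finset.mul_sum,
    ← Finset.sum_add_distrib]
  gcongr with i
  calc |a * x i + b * y i| ≤ |a * x i| + |b * y i| := abs_add_le _ _
    _ = a * |x i| + b * |y i| := by rw [abs_mul, abs_mul, abs_of_nonneg ha, abs_of_nonneg hb]

theorem forall_sum_le_sum_iff {ι M : Type*} {α : ι → Type*} [Fintype ι] [AddCommMonoid M]
    [PartialOrder M] [IsOrderedCancelAddMonoid M] (φ : ∀ i, α i → M) (x : ∀ i, α i) :
    (∀ y : ∀ i, α i, ∑ i, φ i (x i) ≤ ∑ i, φ i (y i)) ↔ ∀ i t, φ i (x i) ≤ φ i t := by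
  classical
  refine ⟨fun h i t => ?_, fun h y => Finset.sum_le_sum fun i _ => h i (y i)⟩
  have hupd := h (Function.update x i t)
  simp only [Function.apply_update φ x i t] at hupd
  have hself : ∑ j, φ j (x j) = ∑ j, Function.update (fun k => φ k (x k)) i (φ i (x i)) j := by
    rw [Function.update_eq_self]
  rw [hself, Finset.sum_update_of_mem (Finset.mem_univ i),
    Finset.sum_update_of_mem (Finset.mem_univ i)] at hupd
  exact le_of_add_le_add_right hupd

theorem forall_mul_sum_abs_le_add_inner_iff {ι : Type*} [Fintype ι] (β : ℝ)
    (x g : EuclideanSpace ℝ ι) :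
    (∀ w : EuclideanSpace ℝ ι, β * ∑ i, |x i| ≤ β * ∑ i, |w i| + ⟪g, w - x⟫_ℝ) ↔
      ∀ i t, β * |x i| ≤ β * |t| + g i * (t - x i) := by
  have hsep := forall_sum_le_sum_iff (fun i t => β * |t| + g i * (t - x i)) x.ofLp
  simp only [sub_self, mul_zero, add_zero] at hsep
  rw [← hsep]
  simp only [real_inner_comm _ g, PiLp.inner_apply, PiLp.sub_apply, RCLike.inner_apply,
    conj_trivial, Finset.mul_sum, Finset.sum_add_distrib]
  exact ⟨fun h y => h (WithLp.toLp 2 y), fun h w => h w.ofLp⟩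

noncomputable def softThreshold (α u : ℝ) : ℝ := Real.sign u * max (|u| - α) 0

section SoftThreshold

variable {α u x : ℝ}

theorem softThreshold_of_lt (hα : 0 ≤ α) (h : α < u) : softThreshold α u = u - α := by
  have hu : 0 < u := by linarith
  rw [softThreshold, Real.sign_of_pos hu, abs_of_pos hu, max_eq_left (by linarith), one_mul]

theorem softThreshold_of_lt_neg (hα : 0 ≤ α) (h : u < -α) : softThreshold α u = u + α := by
  have hu : u < 0 := by linarith
  rw [softThreshold, Real.sign_of_neg hu, abs_of_neg hu, max_eq_left (by linarith)]
  ring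

theorem softThreshold_of_abs_le (h : |u| ≤ α) : softThreshold α u = 0 := by
  rw [softThreshold, max_eq_right (by linarith), mul_zero]

theorem softThreshold_eq_iff (hα : 0 ≤ α) :
    softThreshold α u = x ↔ |u - x| ≤ α ∧ (u - x) * x = α * |x| := by
  constructor
  · rintro rfl
    rcases lt_or_ge α u with hu | hu
    · rw [softThreshold_of_lt hα hu, sub_sub_cancel, abs_of_nonneg hα,
        abs_of_pos (sub_pos.2 hu)]
      exact ⟨le_rfl, rfl⟩
    rcases lt_or_ge u (-α) with hu' | hu'
    · rw [softThreshold_of_lt_neg hα hu', sub_add_cancel_left, abs_neg, abs_of_nonneg hα,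
        abs_of_neg (by linarith : u + α < 0)]
      exact ⟨le_rfl, by ring⟩
    · rw [softThreshold_of_abs_le (abs_le.2 ⟨hu', hu⟩)]
      simpa using abs_le.2 ⟨hu', hu⟩
  · rintro ⟨hs, hp⟩
    rcases lt_trichotomy x 0 with hx | rfl | hx
    · rw [abs_of_neg hx] at hp
      have hux : u = x - α := by
        linarith [mul_right_cancel₀ hx.ne (a := u - x) (c := -α) (by linarith)]
      rw [hux, softThreshold_of_lt_neg hα (by linarith)]
      ring
    · exact softThreshold_of_abs_le (by simpa using hs)
    · rw [abs_of_pos hx] at hp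
      have hux : u = x + α := by linarith [mul_right_cancel₀ hx.ne' hp]
      rw [hux, softThreshold_of_lt hα (by linarith)]
      ring

end SoftThreshold

theorem forall_mul_abs_le_iff {β x g : ℝ} :
    (∀ t, β * |x| ≤ β * |t| + g * (t - x)) ↔ |g| ≤ β ∧ g * x = -(β * |x|) := by
  constructor
  · intro h
    have h0 := h 0
    have h2 := h (2 * x)
    have hp := h 1
    have hm := h (-1)
    simp only [abs_zero, abs_one, abs_neg, abs_mul, abs_two] at h0 h2 hp hm
    exact ⟨abs_le.2 ⟨by linarith, by linarith⟩, by linarith⟩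
  · rintro ⟨hg, hgx⟩ t
    nlinarith [neg_abs_le (g * t), abs_mul g t, mul_le_mul_of_nonneg_right hg (abs_nonneg t)]

theorem eq_softThreshold_sub_iff {β γ x g : ℝ} (hβ : 0 ≤ β) (hγ : 0 < γ) :
    x = softThreshold (β * γ) (x - γ * g) ↔ |g| ≤ β ∧ g * x = -(β * |x|) := by
  rw [eq_comm, softThreshold_eq_iff (by positivity), sub_sub_cancel_left, abs_neg, abs_mul,
    abs_of_pos hγ, mul_comm β γ, mul_le_mul_iff_right₀ hγ]
  constructor <;> rintro ⟨h1, h2⟩ <;> refine ⟨h1, ?_⟩ <;> nlinarith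

/-- For `F = f + β‖·‖₁` with `f` convex and differentiable, `w⋆` is a global minimizer
of `F` iff it is a fixed point of the ISTA step `w ↦ S_{βγ}(w − γ∇f(w))`, where the
soft-thresholding `S_{βγ}(t) = sign(t)·max(|t| − βγ, 0)` is applied coordinatewise. -/
theorem ista_fixed_point_iff_minimizer
    (n : ℕ) (f : EuclideanSpace ℝ (Fin n) → ℝ)
    (hconv : ConvexOn ℝ Set.univ f) (hdiff : Differentiable ℝ f)
    (β γ : ℝ) (hβ : 0 ≤ β) (hγ : 0 < γ)
    (S : EuclideanSpace ℝ (Fin n) → EuclideanSpace ℝ (Fin n))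
    (hS : ∀ (u : EuclideanSpace ℝ (Fin n)) (i : Fin n),
        S u i = Real.sign (u i) * max (|u i| - β * γ) 0)
    (wstar : EuclideanSpace ℝ (Fin n)) :
    (∀ w : EuclideanSpace ℝ (Fin n),
        f wstar + β * ∑ i, |wstar i| ≤ f w + β * ∑ i, |w i|)
      ↔ wstar = S (wstar - γ • gradient f wstar) := by
  set g := gradient f wstar
  have hf : HasFDerivAt f (toDual ℝ _ g) wstar :=
    hasGradientAt_iff_hasFDerivAt.1 (hdiff wstar).hasGradientAt
  have hopt := forall_add_le_iff_of_convexOn hconv (convexOn_univ_sum_abs.smul hβ) hf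
  simp only [smul_eq_mul, toDual_apply_apply] at hopt
  rw [hopt, forall_mul_sum_abs_le_add_inner_iff]
  simp only [forall_mul_abs_le_iff, ← eq_softThreshold_sub_iff hβ hγ]
  rw [PiLp.ext_iff]
  simp [hS, softThreshold]
end
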